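/- arXiv:2503.18577 — 3 statements merged into one kernel-verified Lean document; each statement's English description precedes it below -/
import Mathlib

section
/- Let K ⊆ ℝ² be a convex set containing two points x, y with |x−y| = diam(K) =: l₁, and let l₂ be the diameter of the orthogonal projection of K onto a line perpendicular to x−y. Then K contains a rectangle (an isometric copy of [0, l₁/4] × [0, l₂/4]). -/
/-!
Let `x, y` realise the diameter `l₁` and let `e₁` be a unit normal to `x - y`. The points of
`K` extremal in the direction `e₁` are at least `l₂` apart in that direction, so one of them, `p`,
lies at distance `h ≥ l₂ / 2` from the line `xy`; since `|p - x|, |p - y| ≤ l₁`, the foot of `p`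
lies on the segment `[x, y]`. The triangle `xyp ⊆ K` then contains the rectangle whose upper
corners are the midpoints of `xp` and `yp` and whose lower corners are their feet on `[x, y]`: it
has width `l₁ / 2` and height `h / 2 ≥ l₂ / 4`.
-/

open Set Metric Topology RealInnerProductSpace

section Convex

variable {𝕜 E : Type*} [Field 𝕜] [LinearOrder 𝕜] [IsStrictOrderedRing 𝕜] [AddCommGroup E]
  [Module 𝕜 E] {K : Set E}

theorem Convex.add_smul_mem_of_mem_Icc (hK : Convex 𝕜 K) {p v : E} {a b t : 𝕜}
    (ha : p + a • v ∈ K) (hb : p + b • v ∈ K) (ht : t ∈ Icc a b) : p + t • v ∈ K := by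
  have hline : ∀ r : 𝕜, AffineMap.lineMap p (p + v) r = p + r • v := fun r => by
    rw [AffineMap.lineMap_apply_module', add_sub_cancel_left, add_comm]
  have hconn := (hK.affine_preimage (AffineMap.lineMap (k := 𝕜) p (p + v))).ordConnected.out
    (x := a) (y := b)
  simp only [mem_preimage, hline] at hconn
  simpa only [mem_preimage, hline] using hconn ha hb ht

theorem Convex.add_smul_add_smul_mem_of_mem_Icc (hK : Convex 𝕜 K) {p u v : E}
    {s₀ s₁ t₀ t₁ s t : 𝕜} (h₀₀ : p + s₀ • u + t₀ • v ∈ K) (h₁₀ : p + s₁ • u + t₀ • v ∈ K)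
    (h₀₁ : p + s₀ • u + t₁ • v ∈ K) (h₁₁ : p + s₁ • u + t₁ • v ∈ K) (hs : s ∈ Icc s₀ s₁)
    (ht : t ∈ Icc t₀ t₁) : p + s • u + t • v ∈ K := by
  have hside : ∀ t' : 𝕜, p + s₀ • u + t' • v ∈ K → p + s₁ • u + t' • v ∈ K →
      p + s • u + t' • v ∈ K := by
    intro t' h₀ h₁
    rw [add_right_comm] at h₀ h₁ ⊢
    exact hK.add_smul_mem_of_mem_Icc h₀ h₁ hs
  exact hK.add_smul_mem_of_mem_Icc (hside t₀ h₀₀ h₁₀) (hside t₁ h₀₁ h₁₁) ht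

theorem Convex.add_smul_add_smul_mem_of_triangle (hK : Convex 𝕜 K) {x u v : E} {l a h s t : 𝕜}
    (ha : 0 ≤ a) (hal : a ≤ l) (hx : x ∈ K) (hy : x + l • u ∈ K) (hp : x + a • u + h • v ∈ K)
    (hs : s ∈ Icc (a / 2) ((a + l) / 2)) (ht : t ∈ Icc 0 (h / 2)) :
    x + s • u + t • v ∈ K := by
  have hbase : ∀ r ∈ Icc (0 : 𝕜) l, x + r • u + (0 : 𝕜) • v ∈ K := by
    intro r hr
    rw [zero_smul, add_zero]
    exact hK.add_smul_mem_of_mem_Icc (by simpa using hx) hy hr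
  have hmid : ∀ q ∈ K, (1 / 2 : 𝕜) • q + (1 / 2 : 𝕜) • (x + a • u + h • v) ∈ K := fun q hq =>
    hK hq hp (by norm_num) (by norm_num) (by norm_num)
  refine hK.add_smul_add_smul_mem_of_mem_Icc (hbase _ ⟨by linarith, by linarith⟩)
    (hbase _ ⟨by linarith, by linarith⟩) ?_ ?_ hs ht
  · convert hmid x hx using 1
    module
  · convert hmid _ hy using 1
    module

end Convex

theorem IsCompact.exists_diam_image_le_two_mul_abs_sub {α β : Type*} [TopologicalSpace α]
    [PseudoMetricSpace β] {K : Set α} (hK : IsCompact K) {x : α} (hx : x ∈ K) {f : α → β}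
    {g : α → ℝ} (hg : ContinuousOn g K) (hfg : ∀ p ∈ K, ∀ q ∈ K, dist (f p) (f q) ≤ |g p - g q|) :
    ∃ p ∈ K, diam (f '' K) ≤ 2 * |g p - g x| := by
  obtain ⟨pmax, hpmax, hmax⟩ := hK.exists_isMaxOn ⟨x, hx⟩ hg
  obtain ⟨pmin, hpmin, hmin⟩ := hK.exists_isMinOn ⟨x, hx⟩ hg
  rw [isMaxOn_iff] at hmax
  rw [isMinOn_iff] at hmin
  have hwidth : diam (f '' K) ≤ g pmax - g pmin := by
    refine diam_le_of_forall_dist_le (by linarith [hmax x hx, hmin x hx]) ?_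
    rintro _ ⟨p, hp, rfl⟩ _ ⟨q, hq, rfl⟩
    refine (hfg p hp q hq).trans (abs_sub_le_iff.2 ⟨?_, ?_⟩) <;>
      linarith [hmax p hp, hmax q hq, hmin p hp, hmin q hq]
  by_cases hup : g x - g pmin ≤ g pmax - g x
  · exact ⟨pmax, hpmax, by rw [abs_of_nonneg (sub_nonneg.2 (hmax x hx))]; linarith⟩
  · exact ⟨pmin, hpmin, by rw [abs_of_nonpos (sub_nonpos.2 (hmin x hx))]; linarith⟩

theorem Metric.diam_pos_of_nonempty_interior {X : Type*} [MetricSpace X]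
    [∀ x : X, (𝓝[≠] x).NeBot] {K : Set X} (hK : Bornology.IsBounded K)
    (hint : (interior K).Nonempty) : 0 < diam K := by
  obtain ⟨z, hz⟩ := hint
  rcases eq_singleton_or_nontrivial (interior_subset hz) with rfl | hK'
  · simp [interior_singleton] at hz
  · exact diam_pos hK' hK

section Plane

variable {e₀ e₁ : EuclideanSpace ℝ (Fin 2)}

theorem exists_norm_eq_one_inner_eq_zero (h₀ : ‖e₀‖ = 1) :
    ∃ e₁ : EuclideanSpace ℝ (Fin 2), ‖e₁‖ = 1 ∧ ⟪e₀, e₁⟫ = 0 := by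
  obtain ⟨b, hb⟩ := Orthonormal.exists_orthonormalBasis_extension_of_card_eq (𝕜 := ℝ) (ι := Fin 2)
    (by simp) (v := fun _ => e₀) (s := {0}) (by simpa using h₀)
  refine ⟨b 1, b.orthonormal.1 1, ?_⟩
  rw [← hb 0 rfl]
  exact b.orthonormal.2 (by decide)

theorem orthonormal_pair (h₀ : ‖e₀‖ = 1) (h₁ : ‖e₁‖ = 1) (h₀₁ : ⟪e₀, e₁⟫ = 0) :
    Orthonormal ℝ ![e₀, e₁] := by
  rw [orthonormal_iff_ite]
  intro i j
  fin_cases i <;> fin_cases j <;> simp [h₀, h₁, h₀₁, real_inner_comm e₀ e₁]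

noncomputable def orthonormalBasisOfPair (h₀ : ‖e₀‖ = 1) (h₁ : ‖e₁‖ = 1)
    (h₀₁ : ⟪e₀, e₁⟫ = 0) : OrthonormalBasis (Fin 2) ℝ (EuclideanSpace ℝ (Fin 2)) :=
  (basisOfOrthonormalOfCardEqFinrank (orthonormal_pair h₀ h₁ h₀₁) (by simp)).toOrthonormalBasis
    (by simpa using orthonormal_pair h₀ h₁ h₀₁)

theorem coe_orthonormalBasisOfPair (h₀ : ‖e₀‖ = 1) (h₁ : ‖e₁‖ = 1) (h₀₁ : ⟪e₀, e₁⟫ = 0) :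
    ⇑(orthonormalBasisOfPair h₀ h₁ h₀₁) = ![e₀, e₁] := by
  simp [orthonormalBasisOfPair]

theorem inner_smul_add_inner_smul_eq (h₀ : ‖e₀‖ = 1) (h₁ : ‖e₁‖ = 1) (h₀₁ : ⟪e₀, e₁⟫ = 0)
    (z : EuclideanSpace ℝ (Fin 2)) :
    ⟪e₀, z⟫ • e₀ + ⟪e₁, z⟫ • e₁ = z := by
  simpa [Fin.sum_univ_two, coe_orthonormalBasisOfPair h₀ h₁ h₀₁] using
    (orthonormalBasisOfPair h₀ h₁ h₀₁).sum_repr' z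

theorem exists_isometryEquiv_apply_eq (h₀ : ‖e₀‖ = 1) (h₁ : ‖e₁‖ = 1) (h₀₁ : ⟪e₀, e₁⟫ = 0)
    (c : EuclideanSpace ℝ (Fin 2)) :
    ∃ f : EuclideanSpace ℝ (Fin 2) ≃ᵢ EuclideanSpace ℝ (Fin 2),
      ∀ q, f q = c + q 0 • e₀ + q 1 • e₁ := by
  refine ⟨(orthonormalBasisOfPair h₀ h₁ h₀₁).repr.symm.toIsometryEquiv.trans
    (IsometryEquiv.addLeft c), fun q => ?_⟩
  simp [← OrthonormalBasis.sum_repr_symm, Fin.sum_univ_two, coe_orthonormalBasisOfPair h₀ h₁ h₀₁,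
    add_assoc]

theorem dist_orthogonalProjectionOnto_orthogonal (h₀ : ‖e₀‖ = 1) (h₁ : ‖e₁‖ = 1)
    (h₀₁ : ⟪e₀, e₁⟫ = 0) {U : Submodule ℝ (EuclideanSpace ℝ (Fin 2))} (hU : U = ℝ ∙ e₀)
    (u v : EuclideanSpace ℝ (Fin 2)) :
    dist (Uᗮ.orthogonalProjectionOnto u) (Uᗮ.orthogonalProjectionOnto v) = |⟪e₁, u⟫ - ⟪e₁, v⟫| := by
  subst hU
  rw [dist_eq_norm, ← map_sub, ← Submodule.norm_coe, Submodule.coe_orthogonalProjectionOnto_apply,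
    Submodule.starProjection_orthogonal_val, Submodule.starProjection_unit_singleton ℝ h₀,
    ← eq_sub_iff_add_eq'.2 (inner_smul_add_inner_smul_eq h₀ h₁ h₀₁ (u - v)), norm_smul, h₁,
    mul_one, Real.norm_eq_abs, inner_sub_right]

end Plane

theorem exists_isometryEquiv_image_rectangle_subset {K : Set (EuclideanSpace ℝ (Fin 2))}
    (hK : Convex ℝ K) {e₀ e₁ x p : EuclideanSpace ℝ (Fin 2)} (h₀ : ‖e₀‖ = 1) (h₁ : ‖e₁‖ = 1)
    (h₀₁ : ⟪e₀, e₁⟫ = 0) {l₁ l₂ : ℝ} (hx : x ∈ K) (hy : x + l₁ • e₀ ∈ K) (hp : p ∈ K)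
    (hpx : ‖p - x‖ ≤ l₁) (hpy : ‖p - (x + l₁ • e₀)‖ ≤ l₁) (hh : l₂ ≤ 2 * |⟪e₁, p - x⟫|) :
    ∃ f : EuclideanSpace ℝ (Fin 2) ≃ᵢ EuclideanSpace ℝ (Fin 2),
      f '' {q | q 0 ∈ Icc 0 (l₁ / 4) ∧ q 1 ∈ Icc 0 (l₂ / 4)} ⊆ K := by
  wlog hpos : 0 ≤ ⟪e₁, p - x⟫ generalizing e₁
  · refine this (e₁ := -e₁) (by rwa [norm_neg]) (by rw [inner_neg_right, h₀₁, neg_zero]) ?_ ?_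
    · rwa [inner_neg_left, abs_neg]
    · rw [inner_neg_left]
      linarith
  set a := ⟪e₀, p - x⟫
  set h := ⟪e₁, p - x⟫
  have hp' : x + a • e₀ + h • e₁ ∈ K := by
    rwa [add_assoc, inner_smul_add_inner_smul_eq h₀ h₁ h₀₁, add_sub_cancel]
  have hal : a ≤ l₁ := (real_inner_le_norm _ _).trans (by rwa [h₀, one_mul])
  have ha : 0 ≤ a := by
    have hfar : ⟪e₀, x + l₁ • e₀ - p⟫ = l₁ - a := by
      rw [show x + l₁ • e₀ - p = l₁ • e₀ - (p - x) by abel, inner_sub_right,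
        real_inner_smul_right, real_inner_self_eq_norm_sq, h₀, one_pow, mul_one]
    have hle := real_inner_le_norm e₀ (x + l₁ • e₀ - p)
    rw [hfar, h₀, one_mul, norm_sub_rev] at hle
    linarith
  obtain ⟨f, hf⟩ := exists_isometryEquiv_apply_eq h₀ h₁ h₀₁ (x + (a / 2) • e₀)
  refine ⟨f, ?_⟩
  rintro _ ⟨q, ⟨hq₀, hq₁⟩, rfl⟩
  rw [hf, add_assoc x, ← add_smul]
  exact hK.add_smul_add_smul_mem_of_triangle ha hal hx hy hp'
    ⟨by linarith [hq₀.1], by linarith [hq₀.2]⟩ ⟨hq₁.1, by linarith [hq₁.2, abs_of_nonneg hpos]⟩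

/-- A planar compact convex body `K` with points `x, y` realizing its
diameter `l₁`, and second diameter `l₂` (the diameter of the orthogonal projection
of `K` onto the line perpendicular to `x - y`), contains an isometric copy of the
rectangle `[0, l₁/4] × [0, l₂/4]`. -/
theorem stmt_0 (K : Set (EuclideanSpace ℝ (Fin 2)))
    (hKcomp : IsCompact K) (hKconv : Convex ℝ K) (hKint : (interior K).Nonempty)
    (x y : EuclideanSpace ℝ (Fin 2)) (hx : x ∈ K) (hy : y ∈ K)
    (hdiam : dist x y = Metric.diam K)
    (l₁ l₂ : ℝ) (hl₁ : l₁ = Metric.diam K)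
    (hl₂ : l₂ = Metric.diam
      ((Submodule.orthogonalProjectionOnto ((ℝ ∙ (x - y))ᗮ)) '' K)) :
    ∃ f : EuclideanSpace ℝ (Fin 2) ≃ᵢ EuclideanSpace ℝ (Fin 2),
      f '' {p | p 0 ∈ Set.Icc 0 (l₁ / 4) ∧ p 1 ∈ Set.Icc 0 (l₂ / 4)} ⊆ K := by
  have hdist : ∀ z ∈ K, ∀ w ∈ K, ‖z - w‖ ≤ l₁ := fun z hz w hw =>
    hl₁ ▸ dist_eq_norm z w ▸ dist_le_diam_of_mem hKcomp.isBounded hz hw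
  have hl₁pos : 0 < l₁ := hl₁ ▸ diam_pos_of_nonempty_interior hKcomp.isBounded hKint
  set e₀ := l₁⁻¹ • (x - y)
  have h₀ : ‖e₀‖ = 1 := by
    rw [norm_smul, ← dist_eq_norm, hdiam, ← hl₁, norm_inv, Real.norm_of_nonneg hl₁pos.le,
      inv_mul_cancel₀ hl₁pos.ne']
  have hyx : y + l₁ • e₀ = x := by
    rw [smul_smul, mul_inv_cancel₀ hl₁pos.ne', one_smul, add_sub_cancel]
  have hspan : (ℝ ∙ (x - y)) = ℝ ∙ e₀ :=
    (Submodule.span_singleton_smul_eq (inv_pos.2 hl₁pos).ne'.isUnit _).symm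
  obtain ⟨e₁, h₁, h₀₁⟩ := exists_norm_eq_one_inner_eq_zero h₀
  obtain ⟨p, hp, hwidth⟩ := hKcomp.exists_diam_image_le_two_mul_abs_sub hy
    (f := (ℝ ∙ (x - y))ᗮ.orthogonalProjectionOnto) (g := fun z => ⟪e₁, z⟫) (by fun_prop)
    (fun u _ v _ => (dist_orthogonalProjectionOnto_orthogonal h₀ h₁ h₀₁ hspan u v).le)
  refine exists_isometryEquiv_image_rectangle_subset hKconv h₀ h₁ h₀₁ hy (hyx ▸ hx) hp
    (hdist p hp y hy) (hyx ▸ hdist p hp x hx) ?_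
  rwa [hl₂, inner_sub_right]
end

section
/- Let d ≥ 2 and let K ⊆ ℝ^d be a convex polytope with 2d vertices whose diameters (defined iteratively via orthogonal projections) are 0 < l_d ≤ … ≤ l₁ < ∞. Then K contains a box congruent to the product of the intervals [0, 2^{−2(d−1)} l_i] for i = 1, …, d. -/
/-!
The vector `p i` lies in the `i`-th projection subspace, so `l i` bounds the width of `K` in
direction `p i`, while the pair realizing the `i`-th diameter differs by `l i` in the coordinate
`⟪p i, ·⟫` and not at all in the later coordinates. Induct backwards over the coordinates: if the
later coordinates of points of `K` fill a box `B`, take `y ∈ K` over a point of `B`, correct it by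
a point `v` of the segment `[b i, a i]` so that `(y + v) / 2` has `i`-th coordinate in the middle
of its range, and average with a second point `u` of that segment to move the `i`-th coordinate.
This fills a box that is `B` shrunk by `4` times an interval of length `l i / 2`. So the
coordinates of `K` fill a box with sides `4⁻¹ ^ (d - 1) * l i`, and an orthonormal change of
coordinates carries that box into `K`.
-/

open Metric Set
open scoped RealInnerProductSpace

section Box

variable {𝕜 E : Type*} [Field 𝕜] [LinearOrder 𝕜] [IsStrictOrderedRing 𝕜] [AddCommGroup E]
  [Module 𝕜 E]

theorem LinearMap.exists_mem_segment_apply_eq (f : E →ₗ[𝕜] 𝕜) {a b : E} {s : 𝕜}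
    (hs : s ∈ Icc (f b) (f a)) : ∃ w ∈ segment 𝕜 b a, f w = s := by
  rwa [← segment_eq_Icc (hs.1.trans hs.2), ← LinearMap.coe_toAffineMap, ← image_segment] at hs

theorem LinearMap.apply_eq_of_mem_segment {F : Type*} [AddCommGroup F] [Module 𝕜 F]
    (g : E →ₗ[𝕜] F) {a b w : E} (hw : w ∈ segment 𝕜 a b) (h : g a = g b) : g w = g a := by
  have := image_segment 𝕜 g.toAffineMap a b ▸ mem_image_of_mem g hw
  rwa [LinearMap.coe_toAffineMap, h, segment_same, mem_singleton_iff, ← h] at this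

theorem Convex.exists_mem_apply_eq_of_pi_Icc_subset {ι : Type*} {K : Set E} (hK : Convex 𝕜 K)
    (φ₀ : E →ₗ[𝕜] 𝕜) (φ : ι → E →ₗ[𝕜] 𝕜) {a b : E} (ha : a ∈ K) (hb : b ∈ K)
    (hφ₀ : ∀ x ∈ K, φ₀ x ∈ Icc (φ₀ b) (φ₀ a)) (hφ : ∀ j, φ j a = φ j b) {c w : ι → 𝕜}
    (hbox : univ.pi (fun j => Icc (c j) (c j + w j)) ⊆ (fun x j => φ j x) '' K)
    {t₀ : 𝕜} (ht₀ : t₀ ∈ Icc ((φ₀ a + 3 * φ₀ b) / 4) ((3 * φ₀ a + φ₀ b) / 4)) {t : ι → 𝕜}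
    (ht : ∀ j, t j ∈ Icc ((c j + 3 * φ j a) / 4) ((c j + 3 * φ j a) / 4 + w j / 4)) :
    ∃ x ∈ K, φ₀ x = t₀ ∧ ∀ j, φ j x = t j := by
  obtain ⟨y, hy, hyt⟩ : (fun j => 4 * t j - 3 * φ j a) ∈ (fun x j => φ j x) '' K :=
    hbox fun j _ => ⟨by linarith [(ht j).1], by linarith [(ht j).2]⟩
  obtain ⟨v, hv, hv₀⟩ := φ₀.exists_mem_segment_apply_eq (a := a) (b := b)
    (s := φ₀ a + φ₀ b - φ₀ y) ⟨by linarith [(hφ₀ y hy).2], by linarith [(hφ₀ y hy).1]⟩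
  obtain ⟨u, hu, hu₀⟩ := φ₀.exists_mem_segment_apply_eq (a := a) (b := b)
    (s := 2 * t₀ - (φ₀ a + φ₀ b) / 2) ⟨by linarith [ht₀.1], by linarith [ht₀.2]⟩
  refine ⟨(1 / 2 : 𝕜) • ((1 / 2 : 𝕜) • y + (1 / 2 : 𝕜) • v) + (1 / 2 : 𝕜) • u,
    hK (hK hy (hK.segment_subset hb ha hv) (by norm_num) (by norm_num) (by norm_num))
      (hK.segment_subset hb ha hu) (by norm_num) (by norm_num) (by norm_num), ?_, fun j => ?_⟩
  · simp only [map_add, map_smul, smul_eq_mul, hv₀, hu₀]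
    ring
  · have hyj : φ j y = 4 * t j - 3 * φ j a := congrFun hyt j
    have hvj := (φ j).apply_eq_of_mem_segment hv (hφ j).symm
    have huj := (φ j).apply_eq_of_mem_segment hu (hφ j).symm
    simp only [map_add, map_smul, smul_eq_mul, hyj, hvj, huj, hφ j]
    ring

theorem Convex.exists_pi_Icc_subset_image {K : Set E} (hK : Convex 𝕜 K) (n : ℕ)
    (φ : Fin (n + 1) → E →ₗ[𝕜] 𝕜) (l : Fin (n + 1) → 𝕜) (a b : Fin (n + 1) → E)
    (ha : ∀ i, a i ∈ K) (hb : ∀ i, b i ∈ K) (hl : ∀ i, φ i (a i) - φ i (b i) = l i)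
    (hab : ∀ i j, i < j → φ j (a i) = φ j (b i))
    (hφ : ∀ i, ∀ x ∈ K, φ i x ∈ Icc (φ i (b i)) (φ i (a i))) :
    ∃ c : Fin (n + 1) → 𝕜,
      univ.pi (fun j => Icc (c j) (c j + (4 ^ n)⁻¹ * l j)) ⊆ (fun x j => φ j x) '' K := by
  induction n with
  | zero =>
    refine ⟨fun _ => φ 0 (b 0), fun t ht => ?_⟩
    obtain ⟨w, hw, hwt⟩ := (φ 0).exists_mem_segment_apply_eq (a := a 0) (b := b 0) (s := t 0)
      (by simpa [← hl 0] using ht 0 (mem_univ _))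
    exact ⟨w, hK.segment_subset (hb 0) (ha 0) hw, funext fun j => Fin.fin_one_eq_zero j ▸ hwt⟩
  | succ n ih =>
    obtain ⟨c, hc⟩ := ih (fun j => φ j.succ) (fun j => l j.succ) (fun j => a j.succ)
      (fun j => b j.succ) (fun j => ha _) (fun j => hb _) (fun j => hl _)
      (fun i j hij => hab _ _ (Fin.succ_lt_succ_iff.mpr hij)) (fun j => hφ _)
    refine ⟨Fin.cons ((φ 0 (a 0) + 3 * φ 0 (b 0)) / 4) fun j => (c j + 3 * φ j.succ (a 0)) / 4,
      fun t ht => ?_⟩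
    have ht₀ : t 0 ∈ Icc ((φ 0 (a 0) + 3 * φ 0 (b 0)) / 4) ((3 * φ 0 (a 0) + φ 0 (b 0)) / 4) := by
      obtain ⟨h₁, h₂⟩ := ht 0 (mem_univ _)
      have hl₀ : 0 ≤ l 0 := hl 0 ▸ sub_nonneg.mpr (hφ 0 (a 0) (ha 0)).1
      have h4 : (4 ^ (n + 1) : 𝕜)⁻¹ ≤ 4⁻¹ :=
        inv_anti₀ (by norm_num) (le_self_pow₀ (by norm_num) n.succ_ne_zero)
      simp only [Fin.cons_zero] at h₁ h₂
      exact ⟨h₁, by nlinarith [hl 0]⟩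
    have hts : ∀ j, Fin.tail t j ∈ Icc ((c j + 3 * φ j.succ (a 0)) / 4)
        ((c j + 3 * φ j.succ (a 0)) / 4 + (4 ^ n)⁻¹ * l j.succ / 4) := by
      intro j
      obtain ⟨h₁, h₂⟩ := ht j.succ (mem_univ _)
      simp only [Fin.cons_succ] at h₁ h₂
      refine ⟨h₁, h₂.trans_eq ?_⟩
      ring
    obtain ⟨x, hx, hx₀, hxs⟩ := hK.exists_mem_apply_eq_of_pi_Icc_subset (φ 0) (fun j => φ j.succ)
      (ha 0) (hb 0) (hφ 0) (fun j => hab 0 j.succ (Fin.succ_pos j)) hc ht₀ hts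
    exact ⟨x, hx, funext fun j => Fin.cases hx₀ hxs j⟩

end Box

section Projection

variable {E : Type*} [NormedAddCommGroup E] [InnerProductSpace ℝ E]

theorem orthonormal_of_mem_orthogonal_span_lt {ι : Type*} [LinearOrder ι] {p : ι → E}
    (hnorm : ∀ i, ‖p i‖ = 1) (hp : ∀ i, p i ∈ (Submodule.span ℝ (p '' {j | j < i}))ᗮ) :
    Orthonormal ℝ p := by
  have key : ∀ i j, i < j → ⟪p i, p j⟫ = 0 := fun i j hij =>
    Submodule.inner_right_of_mem_orthogonal (Submodule.subset_span (mem_image_of_mem p hij)) (hp j)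
  refine ⟨hnorm, fun i j hij => ?_⟩
  rcases hij.lt_or_gt with h | h
  · exact key i j h
  · rw [real_inner_comm]; exact key j i h

theorem Submodule.inner_coe_orthogonalProjectionOnto_of_mem (S : Submodule ℝ E)
    [S.HasOrthogonalProjection] {v : E} (hv : v ∈ S) (x : E) :
    ⟪v, (S.orthogonalProjectionOnto x : E)⟫ = ⟪v, x⟫ := by
  rw [← S.starProjection_apply, ← inner_starProjection_left_eq_right,
    S.starProjection_eq_self_iff.mpr hv]

theorem Submodule.inner_sub_eq_of_orthogonalProjectionOnto_sub_eq (S : Submodule ℝ E)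
    [S.HasOrthogonalProjection] {v : E} (hv : v ∈ S) {a b u : E}
    (h : S.subtype (S.orthogonalProjectionOnto a) - S.subtype (S.orthogonalProjectionOnto b) = u) :
    ⟪v, a⟫ - ⟪v, b⟫ = ⟪v, u⟫ := by
  rw [← h, Submodule.subtype_apply, Submodule.subtype_apply, inner_sub_right,
    S.inner_coe_orthogonalProjectionOnto_of_mem hv, S.inner_coe_orthogonalProjectionOnto_of_mem hv]

theorem Submodule.inner_sub_le_diam_image_orthogonalProjectionOnto (S : Submodule ℝ E)
    [S.HasOrthogonalProjection] {K : Set E} (hK : Bornology.IsBounded K) {u : E} (hu : u ∈ S)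
    (hu₁ : ‖u‖ = 1) {x y : E} (hx : x ∈ K) (hy : y ∈ K) :
    ⟪u, x⟫ - ⟪u, y⟫ ≤ diam (S.orthogonalProjectionOnto '' K) :=
  calc ⟪u, x⟫ - ⟪u, y⟫
        = ⟪u, ((S.orthogonalProjectionOnto x - S.orthogonalProjectionOnto y : S) : E)⟫ := by
        rw [Submodule.coe_sub, inner_sub_right, S.inner_coe_orthogonalProjectionOnto_of_mem hu,
          S.inner_coe_orthogonalProjectionOnto_of_mem hu]
    _ ≤ ‖u‖ * ‖((S.orthogonalProjectionOnto x - S.orthogonalProjectionOnto y : S) : E)‖ :=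
        real_inner_le_norm _ _
    _ = dist (S.orthogonalProjectionOnto x) (S.orthogonalProjectionOnto y) := by
        rw [hu₁, one_mul, dist_eq_norm, Submodule.coe_norm]
    _ ≤ diam (S.orthogonalProjectionOnto '' K) :=
        dist_le_diam_of_mem (S.orthogonalProjectionOnto.lipschitz.isBounded_image hK)
          (mem_image_of_mem _ hx) (mem_image_of_mem _ hy)

theorem OrthonormalBasis.exists_isometryEquiv_image_subset {ι : Type*} [Fintype ι]
    (B : OrthonormalBasis ι ℝ E) {K : Set E} {c w : ι → ℝ}
    (h : univ.pi (fun j => Icc (c j) (c j + w j)) ⊆ (fun x j => ⟪B j, x⟫) '' K) :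
    ∃ f : EuclideanSpace ℝ ι ≃ᵢ E, f '' {q | ∀ i, q i ∈ Icc 0 (w i)} ⊆ K := by
  refine ⟨(IsometryEquiv.constVAdd (G := EuclideanSpace ℝ ι) (WithLp.toLp 2 c)).trans
    B.repr.symm.toIsometryEquiv, ?_⟩
  rintro _ ⟨q, hq, rfl⟩
  obtain ⟨x, hx, hxq⟩ := h (a := fun j => c j + q j) fun j _ =>
    ⟨le_add_of_nonneg_right (hq j).1, add_le_add_right (hq j).2 _⟩
  convert hx
  simp only [IsometryEquiv.trans_apply, IsometryEquiv.constVAdd_apply,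
    LinearIsometryEquiv.coe_toIsometryEquiv, LinearIsometryEquiv.symm_apply_eq]
  ext j
  simp [B.repr_apply_apply, ← congrFun hxq j]

end Projection

theorem stmt_1_general (d : ℕ) (hd : 2 ≤ d)
    (V : Finset (EuclideanSpace ℝ (Fin d)))
    (K : Set (EuclideanSpace ℝ (Fin d))) (hK : K = convexHull ℝ (V : Set (EuclideanSpace ℝ (Fin d))))
    (l : Fin d → ℝ) (p : Fin d → EuclideanSpace ℝ (Fin d))
    (hpnorm : ∀ i, ‖p i‖ = 1)
    (hpmem : ∀ i : Fin d, p i ∈ (Submodule.span ℝ (p '' {j | j < i}))ᗮ)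
    (hldiam : ∀ i : Fin d, l i = Metric.diam
      ((Submodule.orthogonalProjectionOnto ((Submodule.span ℝ (p '' {j | j < i}))ᗮ)) '' K))
    (hreal : ∀ i : Fin d, ∃ a ∈ K, ∃ b ∈ K,
      ((Submodule.span ℝ (p '' {j | j < i}))ᗮ).subtype
          ((Submodule.orthogonalProjectionOnto ((Submodule.span ℝ (p '' {j | j < i}))ᗮ)) a)
        - ((Submodule.span ℝ (p '' {j | j < i}))ᗮ).subtype
          ((Submodule.orthogonalProjectionOnto ((Submodule.span ℝ (p '' {j | j < i}))ᗮ)) b)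
        = l i • p i) :
    ∃ f : EuclideanSpace ℝ (Fin d) ≃ᵢ EuclideanSpace ℝ (Fin d),
      f '' {q | ∀ i : Fin d, q i ∈ Set.Icc 0 (((2:ℝ) ^ (2 * (d - 1)))⁻¹ * l i)} ⊆ K := by
  obtain ⟨n, rfl⟩ : ∃ n, d = n + 1 := ⟨d - 1, by omega⟩
  have hKconv : Convex ℝ K := hK ▸ convex_convexHull ℝ _
  have hKbdd : Bornology.IsBounded K :=
    hK ▸ (V.finite_toSet.isCompact_convexHull (𝕜 := ℝ)).isBounded
  have hp : Orthonormal ℝ p := orthonormal_of_mem_orthogonal_span_lt hpnorm hpmem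
  have hpS : ∀ i j, i ≤ j → p j ∈ (Submodule.span ℝ (p '' {k | k < i}))ᗮ := fun i j hij =>
    Submodule.orthogonal_le (Submodule.span_mono (image_mono fun k hk => lt_of_lt_of_le hk hij))
      (hpmem j)
  choose a ha b hb hab using hreal
  have hinner : ∀ i j, i ≤ j → ⟪p j, a i⟫ - ⟪p j, b i⟫ = if j = i then l i else 0 := by
    intro i j hij
    rw [Submodule.inner_sub_eq_of_orthogonalProjectionOnto_sub_eq _ (hpS i j hij) (hab i),
      real_inner_smul_right, orthonormal_iff_ite.mp hp]
    split_ifs <;> simp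
  have hdiag : ∀ i, ⟪p i, a i⟫ - ⟪p i, b i⟫ = l i := fun i => by simpa using hinner i i le_rfl
  have hwidth : ∀ i, ∀ x ∈ K, ∀ y ∈ K, ⟪p i, x⟫ - ⟪p i, y⟫ ≤ l i := fun i x hx y hy =>
    hldiam i ▸ Submodule.inner_sub_le_diam_image_orthogonalProjectionOnto _ hKbdd (hpmem i)
      (hpnorm i) hx hy
  obtain ⟨c, hc⟩ := hKconv.exists_pi_Icc_subset_image n (fun j => innerₛₗ ℝ (p j)) l a b ha hb
    hdiag (fun i j hij => by simpa [hij.ne', sub_eq_zero] using hinner i j hij.le)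
    fun i x hx => by
      simp only [innerₛₗ_apply_apply, mem_Icc]
      constructor <;> linarith [hdiag i, hwidth i x hx (b i) (hb i), hwidth i (a i) (ha i) x hx]
  let B : OrthonormalBasis (Fin (n + 1)) ℝ (EuclideanSpace ℝ (Fin (n + 1))) :=
    (basisOfOrthonormalOfCardEqFinrank hp (by simp)).toOrthonormalBasis (by simpa)
  have hB : ⇑B = p := by simp [B]
  rw [Nat.add_sub_cancel, pow_mul, show (2 : ℝ) ^ 2 = 4 by norm_num]
  exact B.exists_isometryEquiv_image_subset (hB ▸ hc)

/-- A convex polytope `K ⊆ ℝ^d` (`d ≥ 2`) with `2d` vertices, whose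
iteratively defined diameters are `0 < l_d ≤ … ≤ l₁ < ∞` (with orthonormal
orientations `p i`, the `i`-th diameter being the diameter of the orthogonal
projection of `K` onto the orthogonal complement of the span of the previous
orientations, realized in direction `p i`), contains a box congruent to
`∏_{i=1}^d [0, 2^{-2(d-1)} l_i]`. -/
theorem stmt_1 (d : ℕ) (hd : 2 ≤ d)
    (V : Finset (EuclideanSpace ℝ (Fin d))) (hV : V.card = 2 * d)
    (K : Set (EuclideanSpace ℝ (Fin d))) (hK : K = convexHull ℝ (V : Set (EuclideanSpace ℝ (Fin d))))
    (hKint : (interior K).Nonempty)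
    (l : Fin d → ℝ) (p : Fin d → EuclideanSpace ℝ (Fin d))
    (hlpos : ∀ i, 0 < l i)
    (hlmono : ∀ i j : Fin d, i ≤ j → l j ≤ l i)
    (hpnorm : ∀ i, ‖p i‖ = 1)
    (hpmem : ∀ i : Fin d, p i ∈ (Submodule.span ℝ (p '' {j | j < i}))ᗮ)
    (hldiam : ∀ i : Fin d, l i = Metric.diam
      ((Submodule.orthogonalProjectionOnto ((Submodule.span ℝ (p '' {j | j < i}))ᗮ)) '' K))
    (hreal : ∀ i : Fin d, ∃ a ∈ K, ∃ b ∈ K,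
      ((Submodule.span ℝ (p '' {j | j < i}))ᗮ).subtype
          ((Submodule.orthogonalProjectionOnto ((Submodule.span ℝ (p '' {j | j < i}))ᗮ)) a)
        - ((Submodule.span ℝ (p '' {j | j < i}))ᗮ).subtype
          ((Submodule.orthogonalProjectionOnto ((Submodule.span ℝ (p '' {j | j < i}))ᗮ)) b)
        = l i • p i) :
    ∃ f : EuclideanSpace ℝ (Fin d) ≃ᵢ EuclideanSpace ℝ (Fin d),
      f '' {q | ∀ i : Fin d, q i ∈ Set.Icc 0 (((2:ℝ) ^ (2 * (d - 1)))⁻¹ * l i)} ⊆ K :=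
  stmt_1_general d hd V K hK l p hpnorm hpmem hldiam hreal
end

section
/- Let B_d = ∏_{i=1}^d [−a_i, a_i] × {0} ⊆ ℝ^{d+1} and let p ∈ ℝ^{d+1} be a point whose orthogonal projection onto ℝ^d × {0} lies in B_d and whose (d+1)-st coordinate equals h > 0. Then the convex hull of B_d and p contains a box congruent to ∏_{i=1}^d [0, a_i] × [0, h/2]. -/
open Set

/-!
At height `t ∈ [0, h/2]` the horizontal slice of `conv(B_d ∪ {p})` is the box
`(1 - t/h) • B_d + (t/h) • p`, whose half-widths `(1 - t/h) a_i ≥ a_i / 2` shrink while its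
centre moves from `0` towards `p`. Every such slice contains the box of half-widths `a_i / 2`
centred at the projection of `p / 2`, so the translate of `∏ [0, a_i] × [0, h/2]` by
`((p_i - a_i) / 2, 0)` lies in the hull.
-/

theorem mem_convexHull_union_singleton_of_inv_one_sub_smul_mem {E : Type*} [AddCommGroup E]
    [Module ℝ E] {s : Set E} {p x : E} {t : ℝ} (ht₀ : 0 ≤ t) (ht₁ : t < 1)
    (hx : (1 - t)⁻¹ • (x - t • p) ∈ s) : x ∈ convexHull ℝ (s ∪ {p}) := by
  have hcomb := convex_convexHull ℝ (s ∪ {p}) (subset_convexHull ℝ _ (Or.inl hx))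
    (subset_convexHull ℝ _ (Or.inr rfl)) (by linarith : 0 ≤ 1 - t) ht₀ (sub_add_cancel 1 t)
  rwa [smul_inv_smul₀ (by linarith), sub_add_cancel] at hcomb

theorem inv_one_sub_mul_add_sub_mem_Icc {a p y t : ℝ} (hp : p ∈ Icc (-a) a) (hy : y ∈ Icc 0 a)
    (ht : t ≤ 1 / 2) :
    (1 - t)⁻¹ * (y + (p - a) / 2 - t * p) ∈ Icc (-a) a := by
  obtain ⟨hpl, hpu⟩ := hp
  obtain ⟨hyl, hyu⟩ := hy
  have h₁ : 0 < 1 - t := by linarith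
  rw [← div_eq_inv_mul, mem_Icc, le_div_iff₀ h₁, div_le_iff₀ h₁]
  -- the two margins are `y + (1/2 - t)(a + p)` and `(a - y) + (1/2 - t)(a - p)`
  constructor <;> nlinarith

theorem stmt_2_general (d : ℕ) (a : Fin d → ℝ)
    (h : ℝ) (hh : 0 < h)
    (Bd : Set (EuclideanSpace ℝ (Fin (d + 1))))
    (hBd : Bd = {q | (∀ i : Fin d, q i.castSucc ∈ Set.Icc (-(a i)) (a i)) ∧
      q (Fin.last d) = 0})
    (p : EuclideanSpace ℝ (Fin (d + 1)))
    (hproj : ∀ i : Fin d, p i.castSucc ∈ Set.Icc (-(a i)) (a i))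
    (hlast : p (Fin.last d) = h) :
    ∃ f : EuclideanSpace ℝ (Fin (d + 1)) ≃ᵢ EuclideanSpace ℝ (Fin (d + 1)),
      f '' {q | (∀ i : Fin d, q i.castSucc ∈ Set.Icc 0 (a i)) ∧
          q (Fin.last d) ∈ Set.Icc 0 (h / 2)}
        ⊆ convexHull ℝ (Bd ∪ {p}) := by
  set v : EuclideanSpace ℝ (Fin (d + 1)) :=
    WithLp.toLp 2 (Fin.snoc (fun i => (p i.castSucc - a i) / 2) 0) with hv
  refine ⟨IsometryEquiv.addRight v, ?_⟩
  rintro _ ⟨q, ⟨hq, hq_last⟩, rfl⟩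
  set t := q (Fin.last d) / h with ht
  have ht₀ : 0 ≤ t := div_nonneg hq_last.1 hh.le
  have ht_half : t ≤ 1 / 2 := by
    rw [ht, div_le_iff₀ hh]; linarith [hq_last.2]
  apply mem_convexHull_union_singleton_of_inv_one_sub_smul_mem ht₀ (by linarith)
  rw [hBd]
  refine ⟨fun i => ?_, ?_⟩
  · simpa [hv] using inv_one_sub_mul_add_sub_mem_Icc (hproj i) (hq i) ht_half
  · have : t * h = q (Fin.last d) := div_mul_cancel₀ _ hh.ne'
    simp [hv, hlast, this]

/-- Let `B_d = ∏_{i=1}^d [-a_i, a_i] × {0} ⊆ ℝ^{d+1}` and let `p` be a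
point whose orthogonal projection onto `ℝ^d × {0}` lies in `B_d` and whose last
coordinate equals `h > 0`. Then `conv(B_d ∪ {p})` contains a box congruent to
`∏_{i=1}^d [0, a_i] × [0, h/2]`. -/
theorem stmt_2 (d : ℕ) (a : Fin d → ℝ) (ha : ∀ i, 0 ≤ a i)
    (h : ℝ) (hh : 0 < h)
    (Bd : Set (EuclideanSpace ℝ (Fin (d + 1))))
    (hBd : Bd = {q | (∀ i : Fin d, q i.castSucc ∈ Set.Icc (-(a i)) (a i)) ∧
      q (Fin.last d) = 0})
    (p : EuclideanSpace ℝ (Fin (d + 1)))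
    (hproj : ∀ i : Fin d, p i.castSucc ∈ Set.Icc (-(a i)) (a i))
    (hlast : p (Fin.last d) = h) :
    ∃ f : EuclideanSpace ℝ (Fin (d + 1)) ≃ᵢ EuclideanSpace ℝ (Fin (d + 1)),
      f '' {q | (∀ i : Fin d, q i.castSucc ∈ Set.Icc 0 (a i)) ∧
          q (Fin.last d) ∈ Set.Icc 0 (h / 2)}
        ⊆ convexHull ℝ (Bd ∪ {p}) :=
  stmt_2_general d a h hh Bd hBd p hproj hlast
end
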